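/- arXiv:math/0311537 — 2 statements merged into one kernel-verified Lean document; each statement's English description precedes it below -/
import Mathlib

section
/- Let C ⊂ P^n be an (n−k)-rope supported on a line with left type (β_1,...,β_k) and right type (α_0,...,α_{r−k}), r = n−2. Then the Rao function ρ_C(i) = h^1(I_C(i)) is given by ρ_C(i) = ∑_{j=0}^{r−k} C(i+α_j, 1) + ∑_{j=1}^k C(i−β_j, 1) − (r+1)·C(i, 1), with the convention C(a,1) = a if a ≥ 1 and 0 otherwise. -/
/-!
In each degree `i` the graded exact sequence `0 → ⊕ S(-β_j-1) → S(-1)^{r+1} → ⊕ S(α_j-1)` stays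
exact: a matrix with homogeneous entries commutes with taking homogeneous components, so the
degree-`i` part of the image of `A` is the image of the degree-`i` part, and likewise for the
kernel. Rank–nullity then gives `dim (coker A)_i` as an alternating sum of the dimensions
`max (d + 1) 0` of the degree-`d` parts of `K[t, u]`.
-/

open MvPolynomial Matrix Module

namespace Submodule

variable {R ι : Type*} {M : ι → Type*} [Semiring R] [∀ i, AddCommMonoid (M i)]
  [∀ i, Module R (M i)]

def piUnivEquiv (p : ∀ i, Submodule R (M i)) : pi Set.univ p ≃ₗ[R] ∀ i, p i where
  toFun v i := ⟨v.1 i, v.2 i (Set.mem_univ i)⟩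
  invFun w := ⟨fun i => w i, fun i _ => (w i).2⟩
  map_add' _ _ := rfl
  map_smul' _ _ := rfl
  left_inv _ := rfl
  right_inv _ := rfl

instance [Finite ι] (p : ∀ i, Submodule R (M i)) [∀ i, Module.Finite R (p i)] :
    Module.Finite R (pi Set.univ p) :=
  Module.Finite.equiv (piUnivEquiv p).symm

theorem finrank_pi_univ {K : Type*} [DivisionRing K] [Fintype ι] {V : ι → Type*}
    [∀ i, AddCommGroup (V i)] [∀ i, Module K (V i)] (p : ∀ i, Submodule K (V i))
    [∀ i, Module.Finite K (p i)] :
    finrank K (pi Set.univ p) = ∑ i, finrank K (p i) := by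
  rw [(piUnivEquiv p).finrank_eq, Module.finrank_pi_fintype]

theorem finrank_comap_subtype {K V : Type*} [DivisionRing K] [AddCommGroup V] [Module K V]
    (p q : Submodule K V) : finrank K (q.comap p.subtype) = finrank K ↥(q ⊓ p) := by
  rw [← (comapSubtypeEquivOfLe (inf_le_right : q ⊓ p ≤ p)).finrank_eq, comap_inf,
    comap_subtype_self, inf_top_eq]

end Submodule

theorem finrank_quotient_add_finrank_of_inf_eq_map {K U V W : Type*} [DivisionRing K]
    [AddCommGroup U] [Module K U] [AddCommGroup V] [Module K V] [AddCommGroup W] [Module K W]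
    (f : V →ₗ[K] W) (g : U →ₗ[K] V) (hg : Function.Injective g)
    {U' : Submodule K U} {V' : Submodule K V} {W' : Submodule K W}
    [Module.Finite K V'] [Module.Finite K W']
    (himage : LinearMap.range f ⊓ W' = V'.map f) (hker : LinearMap.ker f ⊓ V' = U'.map g) :
    finrank K (W' ⧸ (LinearMap.range f).comap W'.subtype) + finrank K V' =
      finrank K W' + finrank K U' := by
  have hquot := Submodule.finrank_quotient_add_finrank ((LinearMap.range f).comap W'.subtype)
  have hrank := LinearMap.finrank_range_add_finrank_ker (f.domRestrict V')
  rw [Submodule.finrank_comap_subtype, himage] at hquot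
  rw [LinearMap.range_domRestrict, LinearMap.ker_domRestrict, Submodule.finrank_comap_subtype,
    hker, (Submodule.equivMapOfInjective g hg U').finrank_eq.symm] at hrank
  omega

namespace MvPolynomial

variable {σ R : Type*} [CommSemiring R]

theorem IsHomogeneous.homogeneousComponent_mul {p : MvPolynomial σ R} {m : ℕ}
    (hp : p.IsHomogeneous m) (q : MvPolynomial σ R) (N : ℕ) :
    homogeneousComponent N (p * q) = if m ≤ N then p * homogeneousComponent (N - m) q else 0 := by
  induction q using MvPolynomial.induction_on' with
  | monomial d c =>
    have hpd := hp.mul (isHomogeneous_monomial c (rfl : d.degree = d.degree))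
    rw [homogeneousComponent_of_mem hpd,
      homogeneousComponent_of_mem (isHomogeneous_monomial c (rfl : d.degree = d.degree))]
    split_ifs <;> first | rfl | omega | simp
  | add q₁ q₂ h₁ h₂ =>
    rw [mul_add, map_add, h₁, h₂]
    split_ifs <;> simp [mul_add]

-- Indexed by `ℤ` (and `⊥` in negative degree) so that shifted gradings need no truncated
-- subtraction.
variable (σ R) in
noncomputable def homogeneousSubmoduleInt (e : ℤ) : Submodule R (MvPolynomial σ R) :=
  if 0 ≤ e then homogeneousSubmodule σ R e.toNat else ⊥

noncomputable def homogeneousComponentInt (e : ℤ) : MvPolynomial σ R →ₗ[R] MvPolynomial σ R :=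
  if 0 ≤ e then homogeneousComponent e.toNat else 0

theorem homogeneousComponentInt_apply (e : ℤ) (p : MvPolynomial σ R) :
    homogeneousComponentInt e p = if 0 ≤ e then homogeneousComponent e.toNat p else 0 := by
  unfold homogeneousComponentInt
  split_ifs <;> rfl

theorem mem_homogeneousSubmoduleInt_natCast {p : MvPolynomial σ R} {n : ℕ} :
    p ∈ homogeneousSubmoduleInt σ R n ↔ p.IsHomogeneous n := by
  simp [homogeneousSubmoduleInt, mem_homogeneousSubmodule]

theorem homogeneousComponentInt_mem (e : ℤ) (p : MvPolynomial σ R) :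
    homogeneousComponentInt e p ∈ homogeneousSubmoduleInt σ R e := by
  unfold homogeneousComponentInt homogeneousSubmoduleInt
  split_ifs
  · exact homogeneousComponent_isHomogeneous _ _
  · exact Submodule.zero_mem _

theorem mem_homogeneousSubmoduleInt_iff {e : ℤ} {p : MvPolynomial σ R} :
    p ∈ homogeneousSubmoduleInt σ R e ↔ homogeneousComponentInt e p = p := by
  unfold homogeneousComponentInt homogeneousSubmoduleInt
  split_ifs
  · exact ⟨homogeneousComponent_eq_self, fun h => h ▸ homogeneousComponent_isHomogeneous _ _⟩
  · simp [eq_comm]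

theorem homogeneousComponentInt_add_mul {p : MvPolynomial σ R} {m : ℤ}
    (hp : p ∈ homogeneousSubmoduleInt σ R m) (e : ℤ) (q : MvPolynomial σ R) :
    homogeneousComponentInt (m + e) (p * q) = p * homogeneousComponentInt e q := by
  rcases lt_or_ge m 0 with hm | hm
  · have : p = 0 := by simpa [homogeneousSubmoduleInt, hm.not_ge] using hp
    simp [this]
  lift m to ℕ using hm
  rw [mem_homogeneousSubmoduleInt_natCast] at hp
  rw [homogeneousComponentInt_apply, homogeneousComponentInt_apply, hp.homogeneousComponent_mul]
  split_ifs <;> first | omega | simp | rw [show ((m : ℤ) + e).toNat - m = e.toNat by omega]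

section Matrix

variable {m n : Type*}

theorem mem_pi_homogeneousSubmoduleInt_iff {d : n → ℤ} {v : n → MvPolynomial σ R} :
    v ∈ Submodule.pi Set.univ (fun j => homogeneousSubmoduleInt σ R (d j)) ↔
      (fun j => homogeneousComponentInt (d j) (v j)) = v := by
  simp only [Submodule.mem_pi, Set.mem_univ, forall_const, mem_homogeneousSubmoduleInt_iff]
  exact _root_.funext_iff.symm

variable [Fintype n]

theorem homogeneousComponentInt_mulVec (M : Matrix m n (MvPolynomial σ R)) {a : m → ℤ}
    {b : n → ℤ} (hM : ∀ i j, M i j ∈ homogeneousSubmoduleInt σ R (a i - b j))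
    (v : n → MvPolynomial σ R) (i : m) :
    homogeneousComponentInt (a i) ((M *ᵥ v) i) =
      (M *ᵥ fun j => homogeneousComponentInt (b j) (v j)) i := by
  simp only [mulVec, dotProduct, map_sum]
  refine Finset.sum_congr rfl fun j _ => ?_
  rw [← homogeneousComponentInt_add_mul (hM i j), sub_add_cancel]

-- `hM` makes `M : ⊕ S(b j) → ⊕ S(a i)` a graded map of degree `0`; the `pi` submodules are the
-- degree-`0` parts.
theorem range_mulVecLin_inf_pi_homogeneousSubmoduleInt (M : Matrix m n (MvPolynomial σ R))
    {a : m → ℤ} {b : n → ℤ} (hM : ∀ i j, M i j ∈ homogeneousSubmoduleInt σ R (a i - b j)) :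
    LinearMap.range (M.mulVecLin.restrictScalars R) ⊓
        Submodule.pi Set.univ (fun i => homogeneousSubmoduleInt σ R (a i)) =
      (Submodule.pi Set.univ fun j => homogeneousSubmoduleInt σ R (b j)).map
        (M.mulVecLin.restrictScalars R) := by
  apply le_antisymm
  · rintro _ ⟨⟨v, rfl⟩, hv⟩
    refine ⟨fun j => homogeneousComponentInt (b j) (v j), ?_, ?_⟩
    · exact fun j _ => homogeneousComponentInt_mem _ _
    · rw [SetLike.mem_coe, mem_pi_homogeneousSubmoduleInt_iff] at hv
      conv_rhs => rw [← hv]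
      funext i
      exact (homogeneousComponentInt_mulVec M hM v i).symm
  · rintro _ ⟨v, hv, rfl⟩
    refine ⟨LinearMap.mem_range_self _ v, ?_⟩
    rw [SetLike.mem_coe, mem_pi_homogeneousSubmoduleInt_iff] at hv ⊢
    funext i
    change homogeneousComponentInt (a i) ((M *ᵥ v) i) = (M *ᵥ v) i
    rw [homogeneousComponentInt_mulVec M hM, hv]

end Matrix

theorem finrank_homogeneousSubmodule {σ : Type*} [Fintype σ] (K : Type*) [Field K] (n : ℕ) :
    finrank K (homogeneousSubmodule σ K n) = (Fintype.card σ + n - 1).choose n := by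
  classical
  have hs : {d : σ →₀ ℕ | d.degree = n} =
      ((Finset.univ : Finset σ).finsuppAntidiag n : Set (σ →₀ ℕ)) := by
    ext d
    simp [Finset.mem_finsuppAntidiag, Finsupp.degree_eq_sum]
  rw [homogeneousSubmodule_eq_finsupp_supported, hs,
    (AddMonoidAlgebra.supportedEquivFinsupp _).finrank_eq, finrank_finsupp_self]
  simp only [Finset.coe_sort_coe, Fintype.card_coe, Finset.card_finsuppAntidiag_nat_eq_choose,
    Finset.card_univ]

instance [Finite σ] {K : Type*} [Field K] (e : ℤ) :
    Module.Finite K (homogeneousSubmoduleInt σ K e) := by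
  rcases le_or_gt 0 e with he | he
  · rw [homogeneousSubmoduleInt, if_pos he]
    exact Module.Finite.iff_fg.mpr (homogeneousSubmodule_fg σ K _)
  · rw [homogeneousSubmoduleInt, if_neg he.not_ge]
    infer_instance

theorem finrank_homogeneousSubmoduleInt_fin_two (K : Type*) [Field K] (e : ℤ) :
    (finrank K (homogeneousSubmoduleInt (Fin 2) K e) : ℤ) = max (e + 1) 0 := by
  rcases le_or_gt 0 e with he | he
  · rw [homogeneousSubmoduleInt, if_pos he, finrank_homogeneousSubmodule, Fintype.card_fin,
      show 2 + e.toNat - 1 = e.toNat + 1 by omega, Nat.choose_succ_self_right]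
    omega
  · rw [homogeneousSubmoduleInt, if_neg he.not_ge, finrank_bot]
    omega

theorem finrank_pi_homogeneousSubmoduleInt_fin_two (K : Type*) [Field K] {ι : Type*} [Fintype ι]
    (d : ι → ℤ) :
    (finrank K (Submodule.pi Set.univ fun j => homogeneousSubmoduleInt (Fin 2) K (d j)) : ℤ) =
      ∑ j, max (d j + 1) 0 := by
  rw [Submodule.finrank_pi_univ, Nat.cast_sum]
  exact Finset.sum_congr rfl fun j _ => finrank_homogeneousSubmoduleInt_fin_two K (d j)

end MvPolynomial

theorem stmt4_general {K : Type*} [Field K] (r k : ℕ)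
    (α : Fin (r + 1 - k) → ℕ) (β : Fin k → ℕ)
    (A : Matrix (Fin (r + 1 - k)) (Fin (r + 1)) (MvPolynomial (Fin 2) K))
    (B : Matrix (Fin (r + 1)) (Fin k) (MvPolynomial (Fin 2) K))
    (hA : ∀ i j, (A i j).IsHomogeneous (α i))
    (hB : ∀ i j, (B i j).IsHomogeneous (β j))
    (hinj : Function.Injective B.mulVecLin)
    (hexact : LinearMap.range B.mulVecLin = LinearMap.ker A.mulVecLin)
    (hz : ℤ → Submodule K (MvPolynomial (Fin 2) K))
    (hhz : ∀ e : ℤ, hz e = if h : 0 ≤ e then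
      MvPolynomial.homogeneousSubmodule (Fin 2) K e.toNat else ⊥)
    -- degree-`i` piece of the twisted target `⊕_j S(α_j - 1)`
    (T : ℤ → Submodule K (Fin (r + 1 - k) → MvPolynomial (Fin 2) K))
    (hT : ∀ i : ℤ, T i = Submodule.pi Set.univ fun j => hz (i + α j - 1))
    -- the Rao function of `C`: Hilbert function of `coker φ_A ≅ H¹_*(I_C)`
    (ρ : ℤ → ℕ)
    (hρ : ∀ i : ℤ, ρ i = Module.finrank K (↥(T i) ⧸ Submodule.comap (T i).subtype
      ((LinearMap.range A.mulVecLin).restrictScalars K))) :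
    ∀ i : ℤ, (ρ i : ℤ)
      = ∑ j, max (i + α j) 0 + ∑ j, max (i - β j) 0 - (r + 1) * max i 0 := by
  intro i
  have hz_eq : hz = homogeneousSubmoduleInt (Fin 2) K :=
    funext fun e => (hhz e).trans dite_eq_ite
  have hA_graded (j l) : A j l ∈ homogeneousSubmoduleInt (Fin 2) K (i + α j - 1 - (i - 1)) := by
    rw [show i + α j - 1 - (i - 1) = (α j : ℤ) by ring, mem_homogeneousSubmoduleInt_natCast]
    exact hA j l
  have hB_graded (l j) : B l j ∈ homogeneousSubmoduleInt (Fin 2) K (i - 1 - (i - β j - 1)) := by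
    rw [show i - 1 - (i - β j - 1) = (β j : ℤ) by ring, mem_homogeneousSubmoduleInt_natCast]
    exact hB l j
  have hker := range_mulVecLin_inf_pi_homogeneousSubmoduleInt B hB_graded
  rw [LinearMap.range_restrictScalars, hexact, ← LinearMap.ker_restrictScalars] at hker
  have hdim := finrank_quotient_add_finrank_of_inf_eq_map _ _ hinj
    (range_mulVecLin_inf_pi_homogeneousSubmoduleInt A hA_graded) hker
  rw [hρ i, hT i, hz_eq, ← LinearMap.range_restrictScalars]
  zify at hdim
  simp only [finrank_pi_homogeneousSubmoduleInt_fin_two, sub_add_cancel, Finset.sum_const,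
    Finset.card_univ, Fintype.card_fin, nsmul_eq_mul] at hdim
  push_cast at hdim
  linarith

/-- Let `C ⊂ Pⁿ` be an `(n-k)`-rope on a line, with associated exact
sequence `0 → ⊕_{j=1}^k S(-β_j-1) →^B S^{r+1}(-1) →^A ⊕_{i=0}^{r-k} S(α_i-1) → 0`
(`r = n-2`, `S = K[t,u]`), where the maximal-minor ideals of `A` and `B` have codimension 2
(encoded by the radical condition below).  By the identification
`H¹_*(I_C) ≅ coker φ_A` (Hartshorne–Rao module of the rope), the Rao function
`ρ_C(i) = h¹(I_C(i))` is the `K`-dimension of the degree-`i` piece of `coker φ_A`, and it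
equals `∑_{j} C(i+α_j,1) + ∑_j C(i-β_j,1) - (r+1)·C(i,1)`, with `C(a,1) = max a 0`. -/
theorem stmt4 {K : Type*} [Field K] (r k : ℕ) (hk1 : 1 ≤ k) (hkr : k ≤ r)
    (α : Fin (r + 1 - k) → ℕ) (β : Fin k → ℕ)
    (hαpos : ∀ i, 1 ≤ α i) (hβpos : ∀ j, 1 ≤ β j)
    (A : Matrix (Fin (r + 1 - k)) (Fin (r + 1)) (MvPolynomial (Fin 2) K))
    (B : Matrix (Fin (r + 1)) (Fin k) (MvPolynomial (Fin 2) K))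
    (hA : ∀ i j, (A i j).IsHomogeneous (α i))
    (hB : ∀ i j, (B i j).IsHomogeneous (β j))
    (hAB : A * B = 0)
    (hinj : Function.Injective B.mulVecLin)
    (hexact : LinearMap.range B.mulVecLin = LinearMap.ker A.mulVecLin)
    -- `codim I_k(B) = 2`
    (hcodimB : Ideal.span {(X 0 : MvPolynomial (Fin 2) K), X 1} ≤
      (Ideal.span {f | ∃ c : Fin k ↪ Fin (r + 1), f = (B.submatrix ⇑c id).det}).radical)
    -- `codim I_{r+1-k}(A) = 2`
    (hcodimA : Ideal.span {(X 0 : MvPolynomial (Fin 2) K), X 1} ≤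
      (Ideal.span {f | ∃ c : Fin (r + 1 - k) ↪ Fin (r + 1),
        f = (A.submatrix id ⇑c).det}).radical)
    (hz : ℤ → Submodule K (MvPolynomial (Fin 2) K))
    (hhz : ∀ e : ℤ, hz e = if h : 0 ≤ e then
      MvPolynomial.homogeneousSubmodule (Fin 2) K e.toNat else ⊥)
    -- degree-`i` piece of the twisted target `⊕_j S(α_j - 1)`
    (T : ℤ → Submodule K (Fin (r + 1 - k) → MvPolynomial (Fin 2) K))
    (hT : ∀ i : ℤ, T i = Submodule.pi Set.univ fun j => hz (i + α j - 1))
    -- the Rao function of `C`: Hilbert function of `coker φ_A ≅ H¹_*(I_C)`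
    (ρ : ℤ → ℕ)
    (hρ : ∀ i : ℤ, ρ i = Module.finrank K (↥(T i) ⧸ Submodule.comap (T i).subtype
      ((LinearMap.range A.mulVecLin).restrictScalars K))) :
    ∀ i : ℤ, (ρ i : ℤ)
      = ∑ j, max (i + α j) 0 + ∑ j, max (i - β j) 0 - (r + 1) * max i 0 :=
  stmt4_general r k α β A B hA hB hinj hexact hz hhz T hT ρ hρ
end

section
/- Let g ≤ 0 and fix k ≥ 1. Among all left types β = (β_1 ≤ ... ≤ β_k) of positive integers summing to −g, the function ρ_β(z) = −kz − g + ∑_{j=1}^k C(z−β_j, 1) for z > 0 is pointwise minimized by the balanced type β_min in which all entries differ by at most 1. Specifically, if β' is a left type with β_i ≤ β_j − 2 and β'' is the left type obtained from β' by replacing β_i, β_j with β_i+1, β_j−1, then this exchange toward balanced entries does not increase ρ at any z > 0: ρ_1(z) − ρ_2(z) = C(z−β_i−1, 0) − C(z−β_j, 0) ≥ 0 when β_i ≤ β_j, where ρ_1 = ρ_{β'} and ρ_2 = ρ_{β''}. -/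
/-- Among all left types `β = (β_1,…,β_k)` of positive integers summing to
`-g`, the (degree > 0 part of the) Rao function `ρ_β(z) = -kz - g + ∑ C(z-β_j,1)` (with
`C(a,1) = max a 0`) is pointwise minimized by the balanced type `β_min`; and for the
exchange step replacing `β_i, β_j` by `β_i + 1, β_j - 1` (valid when `β_i + 2 ≤ β_j`) one
has, for every `z > 0`,
`ρ_1(z) - ρ_2(z) = C(z-β_i-1,0) - C(z-β_j,0) ≥ 0` (with `C(a,0) = 1` if `a ≥ 0`, else `0`). -/
theorem stmt15 (k : ℕ) (hk : 1 ≤ k) (g : ℤ)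
    (β : Fin k → ℤ) (hβ : ∀ j, 1 ≤ β j) (hsum : ∑ j, β j = -g)
    (p s : ℕ) (hps : -g = p * k + s) (hs : s < k)
    (βmin : Fin k → ℤ)
    (hβmin : ∀ j, βmin j = if (j : ℕ) < k - s then (p : ℤ) else (p : ℤ) + 1) :
    (∀ z : ℤ, 0 < z →
        -(k : ℤ) * z - g + ∑ j, max (z - βmin j) 0
          ≤ -(k : ℤ) * z - g + ∑ j, max (z - β j) 0)
    ∧ ∀ i j : Fin k, i ≠ j → β i + 2 ≤ β j → ∀ z : ℤ, 0 < z →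
        ((∑ h, max (z - β h) 0)
            - ∑ h, max (z - Function.update (Function.update β i (β i + 1)) j (β j - 1) h) 0
          = (if 0 ≤ z - β i - 1 then (1 : ℤ) else 0) - (if 0 ≤ z - β j then (1 : ℤ) else 0))
        ∧ 0 ≤ (∑ h, max (z - β h) 0)
            - ∑ h, max (z - Function.update (Function.update β i (β i + 1)) j (β j - 1) h) 0 := by
  have hind : ∑ j : Fin k, (if (j:ℕ) < k - s then (0:ℤ) else 1) = s := by
    rw [Fin.sum_univ_eq_sum_range (fun n => if n < k - s then (0:ℤ) else 1)]
    rw [Finset.sum_ite, Finset.sum_const, Finset.sum_const]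
    simp only [smul_zero, zero_add, nsmul_eq_mul, mul_one]
    norm_cast
    rw [Finset.filter_not, Finset.card_sdiff_of_subset (Finset.filter_subset _ _)]
    have h2 : (Finset.range k).filter (fun j => j < k - s) = Finset.range (k - s) := by
      ext x; simp; omega
    rw [h2, Finset.card_range, Finset.card_range]; omega
  have hsummin : ∑ j, βmin j = (p : ℤ) * k + s := by
    calc ∑ j, βmin j = ∑ j : Fin k, ((p:ℤ) + (if (j:ℕ) < k - s then 0 else 1)) := by
          refine Finset.sum_congr rfl fun j _ => ?_
          rw [hβmin]; split <;> ring
      _ = (p : ℤ) * k + s := by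
          rw [Finset.sum_add_distrib, hind, Finset.sum_const, Finset.card_univ,
            Fintype.card_fin]
          push_cast; ring
  constructor
  · intro z hz
    have key : ∑ j, max (z - βmin j) 0 ≤ ∑ j, max (z - β j) 0 := by
      rcases le_or_gt z (p : ℤ) with hzp | hzp
      · have h1 : ∑ j, max (z - βmin j) 0 = 0 := by
          refine Finset.sum_eq_zero fun j _ => ?_
          rw [hβmin]
          have : (z - if (j : ℕ) < k - s then (p:ℤ) else (p:ℤ) + 1) ≤ 0 := by
            split <;> omega
          exact max_eq_right this
        rw [h1]
        exact Finset.sum_nonneg fun j _ => le_max_right _ _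
      · have h1 : ∑ j, max (z - βmin j) 0 = (k : ℤ) * z - ((p : ℤ) * k + s) := by
          rw [← hsummin]
          rw [show ∑ j, max (z - βmin j) 0 = ∑ j, (z - βmin j) from
            Finset.sum_congr rfl fun j _ => max_eq_left (by rw [hβmin]; split <;> omega)]
          rw [Finset.sum_sub_distrib, Finset.sum_const, Finset.card_univ, Fintype.card_fin]
          push_cast; ring
        have h2 : (k : ℤ) * z - ((p : ℤ) * k + s) ≤ ∑ j, max (z - β j) 0 := by
          calc (k : ℤ) * z - ((p : ℤ) * k + s) = ∑ j, (z - β j) := by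
                rw [Finset.sum_sub_distrib, hsum, Finset.sum_const, Finset.card_univ,
                  Fintype.card_fin, hps]; push_cast; ring
            _ ≤ ∑ j, max (z - β j) 0 := Finset.sum_le_sum fun j _ => le_max_left _ _
        omega
    omega
  · intro i j hij hle z hz
    set β'' := Function.update (Function.update β i (β i + 1)) j (β j - 1) with hβ''
    have hβi : β'' i = β i + 1 := by
      rw [hβ'', Function.update_of_ne hij, Function.update_self]
    have hβj : β'' j = β j - 1 := by
      rw [hβ'', Function.update_self]
    have hother : ∀ h, h ≠ i → h ≠ j → β'' h = β h := fun h h1 h2 => by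
      rw [hβ'', Function.update_of_ne h2, Function.update_of_ne h1]
    have hdiff : (∑ h, max (z - β h) 0) - ∑ h, max (z - β'' h) 0
        = (if 0 ≤ z - β i - 1 then (1 : ℤ) else 0) - (if 0 ≤ z - β j then (1 : ℤ) else 0) := by
      rw [← Finset.sum_sub_distrib]
      rw [Finset.sum_eq_add_sum_sdiff_singleton_of_mem (Finset.mem_univ i)]
      rw [Finset.sum_eq_add_sum_sdiff_singleton_of_mem
        (Finset.mem_sdiff.mpr ⟨Finset.mem_univ j, by simp [hij.symm]⟩)]
      rw [Finset.sum_eq_zero (fun h hh => by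
        simp only [Finset.mem_sdiff, Finset.mem_singleton, Finset.mem_univ] at hh
        rw [hother h hh.1.2 hh.2]; ring)]
      rw [hβi, hβj]
      simp only [max_def]
      split_ifs <;> omega
    refine ⟨hdiff, ?_⟩
    rw [hdiff]
    split_ifs <;> omega
end
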